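/- In TSP⨟ (with sequencing ⨟ instead of sequential composition), the distributive law fails: the process expressions (a.1 + 1)⨟b.1 and a.1⨟b.1 + 1⨟b.1 are not bisimilar. Specifically, the former has no b-transition while the latter has one. -/
import Mathlib


structure LTS (S : Type*) (A : Type*) where
  Tr : S → A → S → Prop
  Acc : S → Prop

def IsBisimulation {S A : Type*} (L : LTS S A) (R : S → S → Prop) : Prop :=
  Symmetric R ∧ ∀ s t, R s t →
    (∀ a s', L.Tr s a s' → ∃ t', L.Tr t a t' ∧ R s' t') ∧
    (L.Acc s → L.Acc t)

def Bisimilar {S A : Type*} (L : LTS S A) (s t : S) : Prop :=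
  ∃ R, IsBisimulation L R ∧ R s t

/-- TSP process expressions: 0, 1, action prefix, choice, sequential
composition, and identifiers from `V`. -/
inductive Expr (A V : Type) where
  | zero | one
  | act (a : A) (p : Expr A V)
  | add (p q : Expr A V)
  | seq (p q : Expr A V)
  | var (X : V)

/-- The acceptance predicate ↓ for TSP, relative to a specification Δ. -/
inductive EAcc {A V : Type} (Δ : V → Expr A V) : Expr A V → Prop
  | one : EAcc Δ .one
  | addL {p q} : EAcc Δ p → EAcc Δ (Expr.add p q)
  | addR {p q} : EAcc Δ q → EAcc Δ (Expr.add p q)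
  | seq {p q} : EAcc Δ p → EAcc Δ q → EAcc Δ (Expr.seq p q)
  | var {X} : EAcc Δ (Δ X) → EAcc Δ (.var X)

/-- Characterization of the TSP⨟ transition relation (sequencing ⨟ instead of
sequential composition): `T` agrees with the operational rules, where the rule
for the second argument of ⨟ has the negative premise that the first argument
has no outgoing transitions. -/
def IsSeqStep {A V : Type} (Δ : V → Expr A V)
    (T : Expr A V → A → Expr A V → Prop) : Prop :=
  ∀ p a q, T p a q ↔
    match p with
    | .zero => False
    | .one => False
    | .act b r => a = b ∧ q = r
    | .add r s => T r a q ∨ T s a q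
    | .seq r s => (∃ r', T r a r' ∧ q = Expr.seq r' s) ∨
        (EAcc Δ r ∧ (∀ b r', ¬ T r b r') ∧ T s a q)
    | .var X => T (Δ X) a q
inductive Lab where
  | a | b

def Δ9 : Empty → Expr Lab Empty := fun x => x.elim

/-- `(a.1 + 1) ⨟ b.1` -/
def lhs9 : Expr Lab Empty :=
  Expr.seq ((Expr.act .a .one).add .one) (.act .b .one)

/-- `a.1 ⨟ b.1 + 1 ⨟ b.1` -/
def rhs9 : Expr Lab Empty :=
  (Expr.seq (Expr.act .a .one) (.act .b .one)).add (Expr.seq .one (.act .b .one))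

/-- in TSP⨟ the distributive law fails: `(a.1 + 1)⨟b.1` has no
`b`-transition, `a.1⨟b.1 + 1⨟b.1` has one, and the two are not bisimilar. -/
theorem seq_distributivity_fails
    (T : Expr Lab Empty → Lab → Expr Lab Empty → Prop) (hT : IsSeqStep Δ9 T) :
    (∀ q, ¬ T lhs9 .b q) ∧ (∃ q, T rhs9 .b q) ∧
    ¬ Bisimilar ⟨T, EAcc Δ9⟩ lhs9 rhs9 := by

  -- basic facts
  have hact : ∀ (x : Lab) (p q : Expr Lab Empty), T (.act x p) .b q ↔ Lab.b = x ∧ q = p := by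
    intro x p q; rw [hT]
  have hone : ∀ (x : Lab) (q : Expr Lab Empty), ¬ T .one x q := by
    intro x q h; rw [hT] at h; exact h
  have haTr : T ((Expr.act .a .one).add .one) .a .one := by
    rw [hT]; left; rw [hT]; exact ⟨rfl, rfl⟩
  have hnolhs : ∀ q, ¬ T lhs9 .b q := by
    intro q h
    rw [hT] at h
    rcases h with ⟨r', hr, _⟩ | ⟨_, hno, _⟩
    · rw [hT] at hr
      rcases hr with hr | hr
      · rw [hT] at hr; exact Lab.noConfusion hr.1
      · exact hone _ _ hr
    · exact hno _ _ haTr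
  have hrhs : T rhs9 .b .one := by
    rw [hT]; right; rw [hT]; right
    refine ⟨EAcc.one, fun b r' h => hone _ _ h, ?_⟩
    rw [hT]; exact ⟨rfl, rfl⟩
  refine ⟨hnolhs, ⟨.one, hrhs⟩, ?_⟩
  rintro ⟨R, ⟨hsym, hbis⟩, hR⟩
  obtain ⟨t', ht', _⟩ := (hbis _ _ (hsym hR)).1 .b .one hrhs
  exact hnolhs t' ht'
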